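/- arXiv:cs/0512034 — 4 statements merged into one kernel-verified Lean document; each statement's English description precedes it below -/
import Mathlib

section
/- For any q in [0,1] and any q' in [0,1] with q' ≠ q, if g(q) = -k q² + 2k q + c₁ and h(q) = 2k q with k > 0, then g(q) - (1-q)h(q) > g(q') - (1-q)h(q'). That is, the linear compensation scheme is truth-telling on all of [0,1]. -/
theorem linear_scheme_truth_telling (k c₁ : ℝ) (hk : 0 < k) (hc₁ : 0 < c₁)
    (g h : ℝ → ℝ)
    (hg : ∀ q, g q = -k * q ^ 2 + 2 * k * q + c₁)
    (hh : ∀ q, h q = 2 * k * q)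
    (q q' : ℝ) (hq : q ∈ Set.Icc (0:ℝ) 1) (hq' : q' ∈ Set.Icc (0:ℝ) 1)
    (hne : q' ≠ q) :
    g q - (1 - q) * h q > g q' - (1 - q) * h q' := by
  rw [hg, hg, hh, hh]
  have : q' - q ≠ 0 := sub_ne_zero.mpr hne
  nlinarith [pow_pos (abs_pos.mpr this) 2, sq_abs (q'-q), sq_nonneg (q - q')]
end

section
/- Suppose k, c₁, c, v are positive reals with c ≤ c₁ ≤ v - k and v² ≥ 4 k c₁. Let q₀ = (v - √(v² - 4 k c₁)) / (2k). Then for all q ∈ [q₀, 1], we have c ≤ k q² + c₁ ≤ q v. That is, the linear compensation scheme is incentive compatible on [q₀, 1]. -/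
theorem linear_scheme_incentive_compatible (k c₁ c v : ℝ)
    (hk : 0 < k) (hc₁ : 0 < c₁) (hc : 0 < c) (hv : 0 < v)
    (hcc₁ : c ≤ c₁) (hc₁v : c₁ ≤ v - k) (hdisc : v ^ 2 ≥ 4 * k * c₁)
    (q₀ : ℝ) (hq₀ : q₀ = (v - Real.sqrt (v ^ 2 - 4 * k * c₁)) / (2 * k))
    (q : ℝ) (hq : q ∈ Set.Icc q₀ 1) :
    c ≤ k * q ^ 2 + c₁ ∧ k * q ^ 2 + c₁ ≤ q * v := by
  obtain ⟨hq1, hq2⟩ := hq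
  set s := Real.sqrt (v ^ 2 - 4 * k * c₁) with hs
  have hs0 : 0 ≤ s := Real.sqrt_nonneg _
  have hs2 : s ^ 2 = v ^ 2 - 4 * k * c₁ := Real.sq_sqrt (by linarith)
  have hkq : 2 * k * q₀ = v - s := by
    rw [hq₀]; field_simp
  constructor
  · nlinarith [sq_nonneg q, hk.le]
  · have h1 : 2 * k ≤ v + s := by
      rcases le_or_gt (2 * k - v) 0 with h | h
      · linarith
      · nlinarith [sq_nonneg (s - (2*k - v))]
    have h2 : 0 ≤ (q - q₀) * (v + s - 2 * k * q) := by
      apply mul_nonneg (by linarith)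
      nlinarith
    have hkey : 2*k*((q - q₀) * (v + s - 2 * k * q)) = 4*k*(q*v - k*q^2 - c₁) := by
      linear_combination (-(v + s - 2*k*q)) * hkq + hs2
    nlinarith [mul_nonneg (by positivity : (0:ℝ) ≤ 2*k) h2]
end

section
/- For any q ∈ [0,1) and any q' ∈ [0,1) with q' ≠ q, with g(q) = k q + c₁ and h(q) = -k log(1-q) and k > 0, we have g(q) - (1-q)h(q) > g(q') - (1-q)h(q'). That is, the logarithmic compensation scheme is truth-telling on [0,1). -/
theorem log_scheme_truth_telling (k c₁ : ℝ) (hk : 0 < k) (hc₁ : 0 < c₁)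
    (g h : ℝ → ℝ)
    (hg : ∀ q, g q = k * q + c₁)
    (hh : ∀ q, h q = -k * Real.log (1 - q))
    (q q' : ℝ) (hq : q ∈ Set.Ico (0:ℝ) 1) (hq' : q' ∈ Set.Ico (0:ℝ) 1)
    (hne : q' ≠ q) :
    g q - (1 - q) * h q > g q' - (1 - q) * h q' := by
  obtain ⟨hq0, hq1⟩ := hq
  obtain ⟨hq'0, hq'1⟩ := hq'
  have ha : (0:ℝ) < 1 - q := by linarith
  have hb : (0:ℝ) < 1 - q' := by linarith
  have hdiv : (0:ℝ) < (1 - q') / (1 - q) := div_pos hb ha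
  have hne1 : (1 - q') / (1 - q) ≠ 1 := by
    intro hcon
    apply hne
    field_simp at hcon
    linarith
  have key := Real.log_lt_sub_one_of_pos hdiv hne1
  rw [Real.log_div (ne_of_gt hb) (ne_of_gt ha)] at key
  have key2 : (1 - q) * (Real.log (1 - q') - Real.log (1 - q)) < (1 - q') - (1 - q) := by
    have := mul_lt_mul_of_pos_left key ha
    have hrw : (1 - q) * ((1 - q') / (1 - q) - 1) = (1 - q') - (1 - q) := by
      field_simp
    linarith [hrw ▸ this]
  rw [hg q, hg q', hh q, hh q']
  nlinarith [mul_lt_mul_of_pos_left key2 hk]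
end

section
/- Suppose k, c₁, c, v are positive reals with c ≤ c₁ ≤ v - k, and let q₀ = (c₁ + k)/v. Then for all q ∈ [q₀, 1), we have c ≤ k(1-q)log(1-q) + k q + c₁ ≤ q v. That is, the logarithmic compensation scheme is incentive compatible on [q₀, 1). -/
theorem log_scheme_incentive_compatible (k c₁ c v : ℝ)
    (hk : 0 < k) (hc₁ : 0 < c₁) (hc : 0 < c) (hv : 0 < v)
    (hcc₁ : c ≤ c₁) (hc₁v : c₁ ≤ v - k)
    (q₀ : ℝ) (hq₀ : q₀ = (c₁ + k) / v)
    (q : ℝ) (hq : q ∈ Set.Ico q₀ 1) :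
    c ≤ k * (1 - q) * Real.log (1 - q) + k * q + c₁ ∧
    k * (1 - q) * Real.log (1 - q) + k * q + c₁ ≤ q * v := by
  obtain ⟨hq1, hq2⟩ := hq
  have hq0pos : 0 < q₀ := by rw [hq₀]; positivity
  have hqpos : 0 < q := lt_of_lt_of_le hq0pos hq1
  have ht : 0 < 1 - q := by linarith
  have hlog : Real.log (1 - q) ≤ 0 := Real.log_nonpos (by linarith) (by linarith)
  have hkey : Real.log (1 - q)⁻¹ ≤ (1 - q)⁻¹ - 1 :=
    Real.log_le_sub_one_of_pos (by positivity)
  rw [Real.log_inv] at hkey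
  have h2 : -q ≤ (1 - q) * Real.log (1 - q) := by
    have h := mul_le_mul_of_nonneg_left hkey (le_of_lt ht)
    rw [mul_sub, mul_inv_cancel₀ (ne_of_gt ht)] at h
    nlinarith
  have hq1' : c₁ + k ≤ q * v := by
    rw [hq₀] at hq1
    have := (div_le_iff₀ hv).mp hq1
    linarith
  constructor
  · nlinarith
  · have h3 : k * (1 - q) * Real.log (1 - q) ≤ 0 :=
      mul_nonpos_of_nonneg_of_nonpos (by positivity) hlog
    have h4 : k * q ≤ k := by nlinarith
    linarith
end
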